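/- Let Φ ∈ k[x][y] be nonzero, g ∈ k[x] nonzero, and w ∈ Γ^n. Then m_w^g(Φ) = min{ i ≥ 0 : (∂_y^i(Φ^{w,g}))(g^w) ≠ 0 }. -/

import Mathlib

open MvPolynomial Polynomial

set_option synthInstance.maxHeartbeats 1000000
set_option maxHeartbeats 1000000

variable {k : Type*} [Field k] [CharZero k] {n : ℕ}
variable {Γ : Type*} [AddCommGroup Γ] [LinearOrder Γ] [IsOrderedAddMonoid Γ]

/-- The `w`-degree of a multivariate polynomial, with `wdeg w 0 = ⊥ = -∞`. -/
noncomputable def wdeg (w : Fin n → Γ) (f : MvPolynomial (Fin n) k) : WithBot Γ :=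
  f.support.sup fun d => ((∑ i, d i • w i : Γ) : WithBot Γ)

/-- The leading `w`-homogeneous form `f^w` of `f`. -/
noncomputable def lform (w : Fin n → Γ) (f : MvPolynomial (Fin n) k) :
    MvPolynomial (Fin n) k :=
  letI : DecidableEq (WithBot Γ) := Classical.decEq _
  ∑ d ∈ f.support.filter
      (fun d => ((∑ i, d i • w i : Γ) : WithBot Γ) = wdeg w f),
    MvPolynomial.monomial d (f.coeff d)

/-- `deg_w^g Φ = max_i deg_w (φ_i g^i)` for `Φ = Σ_i φ_i y^i`. -/
noncomputable def wdegG (w : Fin n → Γ) (g : MvPolynomial (Fin n) k)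
    (Φ : Polynomial (MvPolynomial (Fin n) k)) : WithBot Γ :=
  Φ.support.sup fun i => wdeg w (Φ.coeff i * g ^ i)

/-- The leading form `Φ^{w,g}` of `Φ` for the grading in which `x_j` has weight `w_j`
and `y` has weight `deg_w g`: the sum of `φ_i^w y^i` over those `i` with
`deg_w (φ_i g^i) = deg_w^g Φ`. -/
noncomputable def pLform (w : Fin n → Γ) (g : MvPolynomial (Fin n) k)
    (Φ : Polynomial (MvPolynomial (Fin n) k)) : Polynomial (MvPolynomial (Fin n) k) :=
  letI : DecidableEq (WithBot Γ) := Classical.decEq _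
  ∑ i ∈ Φ.support.filter (fun i => wdeg w (Φ.coeff i * g ^ i) = wdegG w g Φ),
    Polynomial.C (lform w (Φ.coeff i)) * Polynomial.X ^ i

/-- `m_w^g(Φ) = min { i : deg_w^g (∂_y^i Φ) = deg_w ((∂_y^i Φ)(g)) }`. -/
noncomputable def mwg (w : Fin n → Γ) (g : MvPolynomial (Fin n) k)
    (Φ : Polynomial (MvPolynomial (Fin n) k)) : ℕ :=
  sInf {i : ℕ |
    wdegG w g (Polynomial.derivative^[i] Φ) = wdeg w ((Polynomial.derivative^[i] Φ).eval g)}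

/-- The `w`-degree of the differential form `dh_1 ∧ ⋯ ∧ dh_s`: the maximum over all
`s`-tuples of indices of the `w`-degree of the corresponding `s × s` Jacobian minor
plus the sum of the corresponding weights (noninjective tuples contribute `⊥`). -/
noncomputable def wedgeDeg (w : Fin n → Γ) {s : ℕ} (h : Fin s → MvPolynomial (Fin n) k) :
    WithBot Γ :=
  Finset.univ.sup fun e : Fin s → Fin n =>
    wdeg w (Matrix.det (Matrix.of fun a b : Fin s => MvPolynomial.pderiv (e b) (h a)))
      + ((∑ b, w (e b) : Γ) : WithBot Γ)

/-- The initial algebra `A^w`: the `k`-subalgebra generated by `f^w` for `f ∈ A \ {0}`. -/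
noncomputable def initAlg (w : Fin n → Γ) (A : Subalgebra k (MvPolynomial (Fin n) k)) :
    Subalgebra k (MvPolynomial (Fin n) k) :=
  Algebra.adjoin k (lform w '' ((A : Set (MvPolynomial (Fin n) k)) \ {0}))

/-- The field of fractions `K^w` of `A^w`, realized as a subfield of the fraction field
of `k[x]`. -/
noncomputable def KW (w : Fin n → Γ) (A : Subalgebra k (MvPolynomial (Fin n) k)) :
    Subfield (FractionRing (MvPolynomial (Fin n) k)) :=
  Subfield.closure
    (algebraMap (MvPolynomial (Fin n) k) (FractionRing (MvPolynomial (Fin n) k)) ''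
      (initAlg w A : Set (MvPolynomial (Fin n) k)))

/-- The field of fractions of a subalgebra `A` of `k[x]`, realized as a subfield of the
fraction field of `k[x]`. -/
noncomputable def fracSub (A : Subalgebra k (MvPolynomial (Fin n) k)) :
    Subfield (FractionRing (MvPolynomial (Fin n) k)) :=
  Subfield.closure
    (algebraMap (MvPolynomial (Fin n) k) (FractionRing (MvPolynomial (Fin n) k)) ''
      (A : Set (MvPolynomial (Fin n) k)))

/-- A polynomial is `w`-homogeneous if all its monomials have the same `w`-degree. -/
def IsWHom (w : Fin n → Γ) (f : MvPolynomial (Fin n) k) : Prop :=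
  ∃ γ : Γ, ∀ d ∈ f.support, (∑ i, d i • w i : Γ) = γ

/-! Give `y` the weight `deg_w g`. The leading form `f ↦ f^w` is multiplicative, so the top
`w`-homogeneous component of `Ψ(g) = Σ ψ_j g^j` in degree `deg_w^g Ψ` is `Ψ^{w,g}(g^w)`; hence
`deg_w^g Ψ = deg_w Ψ(g)` iff `Ψ^{w,g}(g^w) ≠ 0`. Differentiation in `y` lowers all weights by
`deg_w g` (in characteristic zero the factors `j + 1` do not change `w`-degrees), so
`(∂_y^i Φ)^{w,g} = ∂_y^i (Φ^{w,g})` whenever the right side is nonzero, i.e. for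
`i ≤ deg_y Φ^{w,g}`. At `i = deg_y Φ^{w,g}` the right side is a nonzero constant, so both minima
lie in this range, where the two conditions agree. -/

section

lemma sum_smul_eq_weight {σ M : Type*} [Fintype σ] [AddCommMonoid M] (w : σ → M)
    (d : σ →₀ ℕ) : ∑ i, d i • w i = Finsupp.weight w d := by
  rw [Finsupp.weight_apply, Finsupp.sum_fintype _ _ fun i => zero_smul ℕ (w i)]

variable {k : Type*} [Field k] {Γ : Type*} [AddCommGroup Γ] [LinearOrder Γ]
variable {w : Fin n → Γ} {f : MvPolynomial (Fin n) k} {g : MvPolynomial (Fin n) k}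
variable {Φ : (MvPolynomial (Fin n) k)[X]} {D : Γ}

lemma wdeg_eq_weightedTotalDegree' (w : Fin n → Γ) (f : MvPolynomial (Fin n) k) :
    wdeg w f = weightedTotalDegree' w f := by
  simp only [wdeg, weightedTotalDegree', sum_smul_eq_weight]

lemma wdeg_eq_bot_iff : wdeg w f = ⊥ ↔ f = 0 := by
  rw [wdeg_eq_weightedTotalDegree', weightedTotalDegree'_eq_bot_iff]

lemma wdeg_zero : wdeg w (0 : MvPolynomial (Fin n) k) = ⊥ := wdeg_eq_bot_iff.2 rfl

lemma wdeg_le_iff {D : WithBot Γ} :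
    wdeg w f ≤ D ↔ ∀ d ∈ f.support, (Finsupp.weight w d : WithBot Γ) ≤ D := by
  rw [wdeg_eq_weightedTotalDegree', weightedTotalDegree', Finset.sup_le_iff]

lemma weight_le_wdeg {d : Fin n →₀ ℕ} (hd : d ∈ f.support) :
    (Finsupp.weight w d : WithBot Γ) ≤ wdeg w f :=
  wdeg_le_iff.1 le_rfl d hd

lemma wdeg_sum_le {ι : Type*} {s : Finset ι} {F : ι → MvPolynomial (Fin n) k} {D : WithBot Γ}
    (hF : ∀ i ∈ s, wdeg w (F i) ≤ D) : wdeg w (∑ i ∈ s, F i) ≤ D := by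
  classical
  refine wdeg_le_iff.2 fun d hd => ?_
  obtain ⟨i, hi, hdi⟩ := Finset.mem_biUnion.1 (MvPolynomial.support_sum hd)
  exact (weight_le_wdeg hdi).trans (hF i hi)

lemma wdeg_add_le (f h : MvPolynomial (Fin n) k) :
    wdeg w (f + h) ≤ max (wdeg w f) (wdeg w h) := by
  classical
  refine wdeg_le_iff.2 fun d hd => ?_
  rcases Finset.mem_union.1 (MvPolynomial.support_add hd) with hd | hd
  · exact le_max_of_le_left (weight_le_wdeg hd)
  · exact le_max_of_le_right (weight_le_wdeg hd)

lemma wdeg_of_isWeightedHomogeneous (hf : IsWeightedHomogeneous w f D) (h0 : f ≠ 0) :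
    wdeg w f = D := by
  rw [wdeg_eq_weightedTotalDegree', hf.weighted_total_degree h0]

lemma coeff_lform (d : Fin n →₀ ℕ) :
    (lform w f).coeff d =
      if (Finsupp.weight w d : WithBot Γ) = wdeg w f then f.coeff d else 0 := by
  classical
  simp only [lform, MvPolynomial.coeff_sum, MvPolynomial.coeff_monomial, Finset.sum_ite_eq',
    Finset.mem_filter, MvPolynomial.mem_support_iff, sum_smul_eq_weight]
  split_ifs <;> simp_all

lemma lform_zero : lform w (0 : MvPolynomial (Fin n) k) = 0 := by
  ext d; simp [coeff_lform]

lemma lform_eq_weightedHomogeneousComponent (hf : wdeg w f = D) :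
    lform w f = weightedHomogeneousComponent w D f := by
  classical
  ext d
  simp [coeff_lform, coeff_weightedHomogeneousComponent, hf]

lemma weightedHomogeneousComponent_eq_zero_of_wdeg_lt (hf : wdeg w f < D) :
    weightedHomogeneousComponent w D f = 0 :=
  weightedHomogeneousComponent_eq_zero' D f fun _ hd hD =>
    (weight_le_wdeg hd).not_gt (hD ▸ hf)

lemma weightedHomogeneousComponent_of_wdeg_le (hf : wdeg w f ≤ D) :
    weightedHomogeneousComponent w D f = if wdeg w f = D then lform w f else 0 := by
  split_ifs with hD
  · exact (lform_eq_weightedHomogeneousComponent hD).symm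
  · exact weightedHomogeneousComponent_eq_zero_of_wdeg_lt (lt_of_le_of_ne hf hD)

lemma lform_ne_zero (hf : f ≠ 0) : lform w f ≠ 0 := by
  obtain ⟨d, hd, hmax⟩ := Finset.exists_mem_eq_sup f.support (support_nonempty.2 hf)
    fun d => (Finsupp.weight w d : WithBot Γ)
  intro h0
  have := congrArg (MvPolynomial.coeff d) h0
  rw [coeff_lform, wdeg_eq_weightedTotalDegree', weightedTotalDegree', ← hmax, if_pos rfl,
    MvPolynomial.coeff_zero] at this
  exact MvPolynomial.mem_support_iff.1 hd this

lemma wdeg_eq_iff_weightedHomogeneousComponent_ne_zero (hf : wdeg w f ≤ D) :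
    wdeg w f = D ↔ weightedHomogeneousComponent w D f ≠ 0 := by
  rw [weightedHomogeneousComponent_of_wdeg_le hf]
  split_ifs with hD
  · refine iff_of_true hD (lform_ne_zero fun h0 => ?_)
    rw [h0, wdeg_zero] at hD
    exact WithBot.bot_ne_coe hD
  · exact iff_of_false hD (not_not.2 rfl)

lemma isWeightedHomogeneous_lform (hf : wdeg w f = D) :
    IsWeightedHomogeneous w (lform w f) D := by
  rw [lform_eq_weightedHomogeneousComponent hf]
  exact weightedHomogeneousComponent_isWeightedHomogeneous D f

lemma wdeg_le_of_isWeightedHomogeneous (hf : IsWeightedHomogeneous w f D) : wdeg w f ≤ D :=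
  wdeg_le_iff.2 fun _ hd => WithBot.coe_le_coe.2 (hf (MvPolynomial.mem_support_iff.1 hd)).le

lemma wdeg_sub_lform_lt (hf : wdeg w f = D) : wdeg w (f - lform w f) < D := by
  have hle : wdeg w (f - lform w f) ≤ D := by
    rw [sub_eq_add_neg]
    refine (wdeg_add_le _ _).trans (max_le hf.le (wdeg_le_of_isWeightedHomogeneous ?_))
    exact (isWeightedHomogeneous_lform hf).neg
  refine lt_of_le_of_ne hle fun hD =>
    (wdeg_eq_iff_weightedHomogeneousComponent_ne_zero hle).1 hD ?_
  rw [map_sub, weightedHomogeneousComponent_eq_self (isWeightedHomogeneous_lform hf),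
    ← lform_eq_weightedHomogeneousComponent hf, sub_self]

lemma wdeg_add_and_lform_add_of_wdeg_lt {L r : MvPolynomial (Fin n) k}
    (hL : IsWeightedHomogeneous w L D) (hL0 : L ≠ 0) (hr : wdeg w r < D) :
    wdeg w (L + r) = D ∧ lform w (L + r) = L := by
  have hcomp : weightedHomogeneousComponent w D (L + r) = L := by
    rw [map_add, weightedHomogeneousComponent_eq_self hL,
      weightedHomogeneousComponent_eq_zero_of_wdeg_lt hr, add_zero]
  have hle : wdeg w (L + r) ≤ D :=
    (wdeg_add_le L r).trans (max_le (wdeg_le_of_isWeightedHomogeneous hL) hr.le)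
  have hD := (wdeg_eq_iff_weightedHomogeneousComponent_ne_zero hle).2 (by rwa [hcomp])
  exact ⟨hD, (lform_eq_weightedHomogeneousComponent hD).trans hcomp⟩

lemma lform_of_isWeightedHomogeneous (hf : IsWeightedHomogeneous w f D) : lform w f = f := by
  rcases eq_or_ne f 0 with rfl | h0
  · exact lform_zero
  · have h0D : wdeg w (0 : MvPolynomial (Fin n) k) < D := wdeg_zero.trans_lt (WithBot.bot_lt_coe D)
    simpa using (wdeg_add_and_lform_add_of_wdeg_lt hf h0 h0D).2

lemma lform_natCast (m : ℕ) : lform w (m : MvPolynomial (Fin n) k) = m :=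
  lform_of_isWeightedHomogeneous (by simpa using isWeightedHomogeneous_C w (m : k))

lemma wdeg_coeff_mul_pow_le_wdegG (Φ : (MvPolynomial (Fin n) k)[X]) (j : ℕ) :
    wdeg w (Φ.coeff j * g ^ j) ≤ wdegG w g Φ := by
  by_cases hj : j ∈ Φ.support
  · exact Finset.le_sup (f := fun i => wdeg w (Φ.coeff i * g ^ i)) hj
  · rw [Polynomial.notMem_support_iff.1 hj, zero_mul, wdeg_zero]
    exact bot_le

lemma exists_wdegG_eq (Φ : (MvPolynomial (Fin n) k)[X]) :
    ∃ j, wdegG w g Φ = wdeg w (Φ.coeff j * g ^ j) := by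
  rcases Φ.support.eq_empty_or_nonempty with h | h
  · refine ⟨0, ?_⟩
    rw [wdegG, h, Polynomial.support_eq_empty.1 h, Polynomial.coeff_zero, zero_mul, wdeg_zero,
      Finset.sup_empty]
  · obtain ⟨j, -, hj⟩ := Finset.exists_mem_eq_sup Φ.support h
      fun i => wdeg w (Φ.coeff i * g ^ i)
    exact ⟨j, hj⟩

lemma wdegG_ne_bot (hg : g ≠ 0) (hΦ : Φ ≠ 0) : wdegG w g Φ ≠ ⊥ := by
  obtain ⟨j, hj⟩ := Polynomial.support_nonempty.2 hΦ
  refine ne_bot_of_le_ne_bot ?_ (wdeg_coeff_mul_pow_le_wdegG Φ j)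
  exact mt wdeg_eq_bot_iff.1 (mul_ne_zero (Polynomial.mem_support_iff.1 hj) (pow_ne_zero j hg))

lemma coeff_pLform (j : ℕ) :
    (pLform w g Φ).coeff j =
      if wdeg w (Φ.coeff j * g ^ j) = wdegG w g Φ then lform w (Φ.coeff j) else 0 := by
  simp only [pLform, Polynomial.finsetSum_coeff, Polynomial.coeff_C_mul_X_pow,
    Finset.sum_ite_eq, Finset.mem_filter, Polynomial.mem_support_iff]
  by_cases hj : Φ.coeff j = 0 <;> split_ifs <;> simp_all [lform_zero]

lemma pLform_zero : pLform w g (0 : (MvPolynomial (Fin n) k)[X]) = 0 := by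
  simp [pLform]

lemma pLform_ne_zero (hΦ : Φ ≠ 0) : pLform w g Φ ≠ 0 := by
  obtain ⟨j, hj, hmax⟩ := Finset.exists_mem_eq_sup Φ.support (Polynomial.support_nonempty.2 hΦ)
    fun i => wdeg w (Φ.coeff i * g ^ i)
  intro h0
  have := congrArg (Polynomial.coeff · j) h0
  simp only [coeff_pLform, wdegG, hmax, if_pos, Polynomial.coeff_zero] at this
  exact lform_ne_zero (Polynomial.mem_support_iff.1 hj) this

lemma wdeg_eval_le_wdegG (Φ : (MvPolynomial (Fin n) k)[X]) :
    wdeg w (Φ.eval g) ≤ wdegG w g Φ := by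
  rw [eval_eq_sum, Polynomial.sum_def]
  exact wdeg_sum_le fun j _ => wdeg_coeff_mul_pow_le_wdegG Φ j

variable [IsOrderedAddMonoid Γ]

lemma wdeg_mul_le (f h : MvPolynomial (Fin n) k) :
    wdeg w (f * h) ≤ wdeg w f + wdeg w h := by
  classical
  refine wdeg_le_iff.2 fun d hd => ?_
  obtain ⟨a, ha, b, hb, rfl⟩ := Finset.mem_add.1 (MvPolynomial.support_mul f h hd)
  rw [map_add, WithBot.coe_add]
  exact add_le_add (weight_le_wdeg ha) (weight_le_wdeg hb)

lemma wdeg_mul_and_lform_mul_of_ne_zero {h : MvPolynomial (Fin n) k} (hf : f ≠ 0)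
    (hh : h ≠ 0) :
    wdeg w (f * h) = wdeg w f + wdeg w h ∧ lform w (f * h) = lform w f * lform w h := by
  obtain ⟨Df, hDf⟩ := WithBot.ne_bot_iff_exists.1 (mt (wdeg_eq_bot_iff (w := w)).1 hf)
  obtain ⟨Dh, hDh⟩ := WithBot.ne_bot_iff_exists.1 (mt (wdeg_eq_bot_iff (w := w)).1 hh)
  have hlow : wdeg w ((f - lform w f) * h + lform w f * (h - lform w h)) < ↑(Df + Dh) := by
    refine (wdeg_add_le (w := w) _ _).trans_lt (max_lt ?_ ?_) <;>
      refine (wdeg_mul_le _ _).trans_lt ?_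
    · rw [← hDh, WithBot.coe_add]
      exact WithBot.add_lt_add_right WithBot.coe_ne_bot (wdeg_sub_lform_lt hDf.symm)
    · rw [wdeg_of_isWeightedHomogeneous (isWeightedHomogeneous_lform hDf.symm) (lform_ne_zero hf),
        WithBot.coe_add]
      exact WithBot.add_lt_add_left WithBot.coe_ne_bot (wdeg_sub_lform_lt hDh.symm)
  have key := wdeg_add_and_lform_add_of_wdeg_lt
    ((isWeightedHomogeneous_lform hDf.symm).mul (isWeightedHomogeneous_lform hDh.symm))
    (mul_ne_zero (lform_ne_zero hf) (lform_ne_zero hh)) hlow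
  rw [show lform w f * lform w h + ((f - lform w f) * h + lform w f * (h - lform w h)) = f * h
    by ring] at key
  rw [← hDf, ← hDh, ← WithBot.coe_add]
  exact key

lemma wdeg_mul (f h : MvPolynomial (Fin n) k) : wdeg w (f * h) = wdeg w f + wdeg w h := by
  rcases eq_or_ne f 0 with rfl | hf
  · simp [wdeg_zero]
  rcases eq_or_ne h 0 with rfl | hh
  · simp [wdeg_zero]
  exact (wdeg_mul_and_lform_mul_of_ne_zero hf hh).1

lemma lform_mul (f h : MvPolynomial (Fin n) k) : lform w (f * h) = lform w f * lform w h := by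
  rcases eq_or_ne f 0 with rfl | hf
  · simp [lform_zero]
  rcases eq_or_ne h 0 with rfl | hh
  · simp [lform_zero]
  exact (wdeg_mul_and_lform_mul_of_ne_zero hf hh).2

lemma lform_pow (f : MvPolynomial (Fin n) k) (m : ℕ) : lform w (f ^ m) = lform w f ^ m := by
  induction m with
  | zero => simpa using lform_of_isWeightedHomogeneous (isWeightedHomogeneous_one k w)
  | succ m ih => rw [pow_succ, lform_mul, ih, pow_succ]

lemma weightedHomogeneousComponent_eval {D : Γ} (hD : wdegG w g Φ = D) :
    weightedHomogeneousComponent w D (Φ.eval g) = (pLform w g Φ).eval (lform w g) := by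
  rw [eval_eq_sum, Polynomial.sum_def, map_sum, pLform, eval_finsetSum, Finset.sum_filter]
  refine Finset.sum_congr rfl fun j _ => ?_
  rw [weightedHomogeneousComponent_of_wdeg_le (hD ▸ wdeg_coeff_mul_pow_le_wdegG Φ j), lform_mul,
    lform_pow, hD]
  simp only [Polynomial.eval_mul, Polynomial.eval_C, Polynomial.eval_pow, Polynomial.eval_X]

lemma wdegG_eq_wdeg_eval_iff (hg : g ≠ 0) (hΦ : Φ ≠ 0) :
    wdegG w g Φ = wdeg w (Φ.eval g) ↔ (pLform w g Φ).eval (lform w g) ≠ 0 := by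
  obtain ⟨D, hD⟩ := WithBot.ne_bot_iff_exists.1 (wdegG_ne_bot (w := w) hg hΦ)
  rw [← hD, eq_comm,
    wdeg_eq_iff_weightedHomogeneousComponent_ne_zero (hD ▸ wdeg_eval_le_wdegG Φ),
    weightedHomogeneousComponent_eval hD.symm]

variable [CharZero k]

lemma wdeg_mul_natCast (f : MvPolynomial (Fin n) k) {m : ℕ} (hm : m ≠ 0) :
    wdeg w (f * (m : MvPolynomial (Fin n) k)) = wdeg w f := by
  have hC : IsWeightedHomogeneous w (m : MvPolynomial (Fin n) k) 0 := by
    simpa using isWeightedHomogeneous_C w (m : k)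
  rw [wdeg_mul, wdeg_of_isWeightedHomogeneous hC (Nat.cast_ne_zero.2 hm), WithBot.coe_zero,
    add_zero]

lemma wdeg_coeff_derivative_mul_pow_add (Φ : (MvPolynomial (Fin n) k)[X]) (j : ℕ) :
    wdeg w ((derivative Φ).coeff j * g ^ j) + wdeg w g =
      wdeg w (Φ.coeff (j + 1) * g ^ (j + 1)) := by
  rw [← wdeg_mul, coeff_derivative, ← Nat.cast_succ,
    show Φ.coeff (j + 1) * ((j + 1 : ℕ) : MvPolynomial (Fin n) k) * g ^ j * g =
      Φ.coeff (j + 1) * g ^ (j + 1) * ((j + 1 : ℕ) : MvPolynomial (Fin n) k) by ring,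
    wdeg_mul_natCast _ j.succ_ne_zero]

lemma wdegG_derivative_add_wdeg (hP : derivative (pLform w g Φ) ≠ 0) :
    wdegG w g (derivative Φ) + wdeg w g = wdegG w g Φ := by
  refine le_antisymm ?_ ?_
  · obtain ⟨j, hj⟩ := exists_wdegG_eq (w := w) (g := g) (derivative Φ)
    rw [hj, wdeg_coeff_derivative_mul_pow_add]
    exact wdeg_coeff_mul_pow_le_wdegG Φ (j + 1)
  · obtain ⟨j, hj⟩ := Polynomial.support_nonempty.2 hP
    rw [Polynomial.mem_support_iff, coeff_derivative, coeff_pLform] at hj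
    have hmax := (ite_ne_right_iff.1 (left_ne_zero_of_mul hj)).1
    rw [← hmax, ← wdeg_coeff_derivative_mul_pow_add]
    exact add_le_add_left (wdeg_coeff_mul_pow_le_wdegG _ j) _

lemma pLform_derivative (hg : g ≠ 0) (hP : derivative (pLform w g Φ) ≠ 0) :
    pLform w g (derivative Φ) = derivative (pLform w g Φ) := by
  ext j : 1
  have hcond : wdeg w ((derivative Φ).coeff j * g ^ j) = wdegG w g (derivative Φ) ↔
      wdeg w (Φ.coeff (j + 1) * g ^ (j + 1)) = wdegG w g Φ := by
    rw [← WithBot.add_right_inj (mt wdeg_eq_bot_iff.1 hg), wdeg_coeff_derivative_mul_pow_add,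
      wdegG_derivative_add_wdeg hP]
  rw [coeff_pLform, coeff_derivative (pLform w g Φ), coeff_pLform]
  simp only [hcond]
  simp only [coeff_derivative Φ, ← Nat.cast_succ, lform_mul, lform_natCast, ite_mul, zero_mul]

lemma pLform_iterate_derivative (hg : g ≠ 0) {i : ℕ}
    (hP : derivative^[i] (pLform w g Φ) ≠ 0) :
    pLform w g (derivative^[i] Φ) = derivative^[i] (pLform w g Φ) := by
  induction i with
  | zero => rfl
  | succ i ih =>
    rw [Function.iterate_succ_apply'] at hP ⊢
    have hi : derivative^[i] (pLform w g Φ) ≠ 0 := fun h => hP (by rw [h, derivative_zero])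
    rw [Function.iterate_succ_apply', pLform_derivative hg (ih hi ▸ hP), ih hi]

end

lemma Nat.sInf_setOf_eq_of_iff {p q : ℕ → Prop} {N : ℕ} (hq : q N) (h : ∀ i ≤ N, p i ↔ q i) :
    sInf {i | p i} = sInf {i | q i} := by
  have hbN : sInf {i | q i} ≤ N := Nat.sInf_le hq
  have hpb : p (sInf {i | q i}) := (h _ hbN).2 (Nat.sInf_mem ⟨N, hq⟩)
  have hab : sInf {i | p i} ≤ sInf {i | q i} := Nat.sInf_le hpb
  exact hab.antisymm (Nat.sInf_le ((h _ (hab.trans hbN)).1 (Nat.sInf_mem ⟨_, hpb⟩)))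

namespace Polynomial

variable {R : Type*} [Semiring R]

lemma iterate_derivative_natDegree (p : R[X]) :
    derivative^[p.natDegree] p = C (p.natDegree.factorial • p.leadingCoeff) := by
  ext m
  rw [coeff_iterate_derivative, coeff_C]
  rcases m with _ | m
  · rw [zero_add, Nat.descFactorial_self, if_pos rfl, leadingCoeff]
  · rw [coeff_eq_zero_of_natDegree_lt (by omega), smul_zero, if_neg m.succ_ne_zero]

lemma iterate_derivative_ne_zero_of_le_natDegree [IsAddTorsionFree R] {p : R[X]} (hp : p ≠ 0)
    {i : ℕ} (hi : i ≤ p.natDegree) : derivative^[i] p ≠ 0 := by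
  intro h
  have := iterate_derivative_natDegree p
  rw [← Nat.sub_add_cancel hi, Function.iterate_add_apply, h, iterate_derivative_zero,
    Nat.sub_add_cancel hi, eq_comm, C_eq_zero] at this
  exact leadingCoeff_ne_zero.2 hp
    ((nsmul_eq_zero_iff_right p.natDegree.factorial_ne_zero).1 this)

end Polynomial

/-- For nonzero `Φ ∈ k[x][y]`, nonzero `g ∈ k[x]` and `w ∈ Γ^n`:
`m_w^g(Φ) = min { i ≥ 0 : (∂_y^i (Φ^{w,g}))(g^w) ≠ 0 }`. -/
theorem stmt3 (Φ : Polynomial (MvPolynomial (Fin n) k)) (hΦ : Φ ≠ 0)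
    (g : MvPolynomial (Fin n) k) (hg : g ≠ 0) (w : Fin n → Γ) :
    mwg w g Φ =
      sInf {i : ℕ | (Polynomial.derivative^[i] (pLform w g Φ)).eval (lform w g) ≠ 0} := by
  have hP : pLform w g Φ ≠ 0 := pLform_ne_zero hΦ
  refine Nat.sInf_setOf_eq_of_iff (N := (pLform w g Φ).natDegree) ?_ fun i hi => ?_
  · rw [iterate_derivative_natDegree, Polynomial.eval_C]
    exact mt (nsmul_eq_zero_iff_right (Nat.factorial_ne_zero _)).1 (leadingCoeff_ne_zero.2 hP)
  · have hPi := iterate_derivative_ne_zero_of_le_natDegree hP hi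
    have hΦi : derivative^[i] Φ ≠ 0 := fun h0 =>
      hPi (by rw [← pLform_iterate_derivative hg hPi, h0, pLform_zero])
    rw [← pLform_iterate_derivative hg hPi]
    exact wdegG_eq_wdeg_eval_iff hg hΦi
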